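/- (Lemma 1, ReLU kernel convergence.) Let x : ℤ → ℝ be a process that is wide-sense stationary with mean zero and covariance function K satisfying K(0) > 0, and let x(1,·), x(2,·), … be i.i.d. copies of x. Fix a window size d ≥ 1, positions t_1, t_2 ∈ ℤ with r = t_2 − t_1, let X̄_c(t) ∈ ℝ^{cd} be the stacked window vector over c channels, and define θ_c = arccos( X̄_c(t_1) · X̄_c(t_2) / (‖X̄_c(t_1)‖ ‖X̄_c(t_2)‖) ) when both norms are nonzero and θ_c = π/2 otherwise. Then the normalized ReLU arc-cosine kernel (1/(c d)) · (1/(2π)) · ‖X̄_c(t_1)‖ · ‖X̄_c(t_2)‖ · ( sin θ_c + (π − θ_c) cos θ_c ) converges almost surely, as c → ∞, to (K(0)/(2π)) · ( sin θ + (π − θ) cos θ ), where θ = arccos( K(r) / K(0) ). -/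

import Mathlib

open MeasureTheory ProbabilityTheory Filter Topology

/-- Inner product `X̄_c(t) ⬝ X̄_c(t')` of the stacked window vectors in `ℝ^{cd}`:
the sum over channels `k < c` of the inner products of the window vectors
`(xc k (t), …, xc k (t − d + 1))`. -/
def stackedDot {Ω : Type*} (xc : ℕ → ℤ → Ω → ℝ) (d c : ℕ) (t t' : ℤ) (ω : Ω) : ℝ :=
  ∑ k ∈ Finset.range c, ∑ i ∈ Finset.range d, xc k (t - i) ω * xc k (t' - i) ω

/-- Euclidean norm `‖X̄_c(t)‖` of the stacked window vector. -/
noncomputable def stackedNorm {Ω : Type*} (xc : ℕ → ℤ → Ω → ℝ) (d c : ℕ)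
    (t : ℤ) (ω : Ω) : ℝ :=
  Real.sqrt (stackedDot xc d c t t ω)

/-- Angle `θ_c = arccos(X̄_c(t₁) ⬝ X̄_c(t₂) / (‖X̄_c(t₁)‖ ‖X̄_c(t₂)‖))` when both norms
are nonzero, and `π/2` otherwise. -/
noncomputable def stackedAngle {Ω : Type*} (xc : ℕ → ℤ → Ω → ℝ) (d c : ℕ)
    (t₁ t₂ : ℤ) (ω : Ω) : ℝ :=
  if stackedNorm xc d c t₁ ω ≠ 0 ∧ stackedNorm xc d c t₂ ω ≠ 0 then
    Real.arccos
      (stackedDot xc d c t₁ t₂ ω / (stackedNorm xc d c t₁ ω * stackedNorm xc d c t₂ ω))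
  else Real.pi / 2


/-! Each Gram entry `X̄_c(s) ⬝ X̄_c(s')`, divided by `c d`, is the average over the channels of `c`
i.i.d. integrable window inner products of mean `d K(s - s')`, so by the strong law it converges
almost surely to `K(s - s')`. The ReLU kernel, as a function of the Gram entries, is homogeneous of
degree one and continuous wherever the diagonal entries are positive, so the normalized kernel
converges to its value at `(K 0, K 0, K r)`. -/

open Finset Real

section Window

variable {Ω : Type*}

def windowDot (d : ℕ) (s s' : ℤ) (f : ℤ → ℝ) : ℝ :=
  ∑ i ∈ range d, f (s - i) * f (s' - i)

lemma measurable_windowDot (d : ℕ) (s s' : ℤ) : Measurable (windowDot d s s') :=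
  Finset.measurable_sum _ fun _ _ => (measurable_pi_apply _).mul (measurable_pi_apply _)

lemma stackedDot_eq_sum_windowDot (xc : ℕ → ℤ → Ω → ℝ) (d c : ℕ) (s s' : ℤ) (ω : Ω) :
    stackedDot xc d c s s' ω = ∑ k ∈ range c, windowDot d s s' (fun t => xc k t ω) :=
  rfl

lemma stackedDot_comm (xc : ℕ → ℤ → Ω → ℝ) (d c : ℕ) (s s' : ℤ) (ω : Ω) :
    stackedDot xc d c s s' ω = stackedDot xc d c s' s ω := by
  simp only [stackedDot, mul_comm]

variable [MeasurableSpace Ω] {μ : Measure Ω} {x : ℤ → Ω → ℝ}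

lemma integrable_windowDot (hL2 : ∀ t, MemLp (x t) 2 μ) (d : ℕ) (s s' : ℤ) :
    Integrable (fun ω => windowDot d s s' (fun t => x t ω)) μ :=
  integrable_finsetSum _ fun _ _ => (hL2 _).integrable_mul (hL2 _)

lemma integral_windowDot (hL2 : ∀ t, MemLp (x t) 2 μ) {K : ℤ → ℝ}
    (hcov : ∀ t₁ t₂, ∫ ω, x t₁ ω * x t₂ ω ∂μ = K (t₁ - t₂)) (d : ℕ) (s s' : ℤ) :
    ∫ ω, windowDot d s s' (fun t => x t ω) ∂μ = d * K (s - s') := by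
  have hint (i : ℕ) : Integrable (fun ω => x (s - i) ω * x (s' - i) ω) μ :=
    (hL2 _).integrable_mul (hL2 _)
  simp only [windowDot]
  rw [integral_finsetSum _ fun i _ => hint i]
  simp [hcov]

theorem ae_tendsto_stackedDot_div {K : ℤ → ℝ} (hL2 : ∀ t, MemLp (x t) 2 μ)
    (hcov : ∀ t₁ t₂, ∫ ω, x t₁ ω * x t₂ ω ∂μ = K (t₁ - t₂))
    {xc : ℕ → ℤ → Ω → ℝ} (hxc_meas : ∀ k t, Measurable (xc k t))
    (hxc_indep : iIndepFun (fun k ω (t : ℤ) => xc k t ω) μ)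
    (hxc_copy : ∀ k, Measure.map (fun ω (t : ℤ) => xc k t ω) μ
      = Measure.map (fun ω (t : ℤ) => x t ω) μ)
    {d : ℕ} (hd : d ≠ 0) (s s' : ℤ) :
    ∀ᵐ ω ∂μ, Tendsto (fun c : ℕ => stackedDot xc d c s s' ω / (c * d)) atTop
      (𝓝 (K (s - s'))) := by
  set Y : ℕ → Ω → ℝ := fun k ω => windowDot d s s' (fun t => xc k t ω)
  have hlaw (k : ℕ) : IdentDistrib (fun ω t => xc k t ω) (fun ω t => x t ω) μ μ :=
    ⟨(measurable_pi_lambda _ (hxc_meas k)).aemeasurable,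
      aemeasurable_pi_lambda _ fun t => (hL2 t).1.aemeasurable, hxc_copy k⟩
  have hY (k : ℕ) : IdentDistrib (Y k) (fun ω => windowDot d s s' (fun t => x t ω)) μ μ :=
    (hlaw k).comp (measurable_windowDot d s s')
  have hindep : Pairwise (Function.onFun (· ⟂ᵢ[μ] ·) Y) := fun i j hij =>
    (hxc_indep.indepFun hij).comp (measurable_windowDot d s s') (measurable_windowDot d s s')
  have hint : Integrable (Y 0) μ := (hY 0).integrable_iff.mpr (integrable_windowDot hL2 d s s')
  filter_upwards [strong_law_ae_real Y hint hindep fun k => (hY k).trans (hY 0).symm]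
    with ω hω
  rw [(hY 0).integral_eq, integral_windowDot hL2 hcov] at hω
  have hd' : (d : ℝ) ≠ 0 := Nat.cast_ne_zero.mpr hd
  simpa only [stackedDot_eq_sum_windowDot, div_div, mul_div_cancel_left₀ _ hd']
    using hω.div_const (d : ℝ)

end Window

/-- The angular factor `J₁` of Cho and Saul's arc-cosine kernel of degree one. -/
noncomputable def arcCosJ (θ : ℝ) : ℝ := sin θ + (π - θ) * cos θ

/-- The ReLU kernel of two vectors `a, b` as a function of `u = ‖a‖²`, `v = ‖b‖²`, `ρ = a ⬝ b`. -/
noncomputable def reluKernel (u v ρ : ℝ) : ℝ :=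
  1 / (2 * π) * √u * √v * arcCosJ (arccos (ρ / (√u * √v)))

lemma reluKernel_div {n : ℝ} (hn : 0 < n) (u v ρ : ℝ) :
    reluKernel (u / n) (v / n) (ρ / n) = reluKernel u v ρ / n := by
  have hsqrt : √(u / n) * √(v / n) = √u * √v / n := by
    rw [sqrt_div' _ hn.le, sqrt_div' _ hn.le, div_mul_div_comm, mul_self_sqrt hn.le]
  have hcos : ρ / n / (√(u / n) * √(v / n)) = ρ / (√u * √v) := by
    rw [hsqrt, div_div_div_cancel_right₀ hn.ne']
  rw [reluKernel, reluKernel, hcos, mul_assoc _ √(u / n), hsqrt]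
  ring

lemma reluKernel_self {u : ℝ} (hu : 0 ≤ u) (ρ : ℝ) :
    reluKernel u u ρ = u / (2 * π) * arcCosJ (arccos (ρ / u)) := by
  rw [reluKernel, mul_self_sqrt hu, mul_assoc (1 / (2 * π)), mul_self_sqrt hu]
  ring

lemma continuous_arcCosJ : Continuous arcCosJ := by
  unfold arcCosJ
  fun_prop

lemma Filter.Tendsto.reluKernel {ι : Type*} {l : Filter ι} {u v ρ : ι → ℝ} {a b r : ℝ}
    (hu : Tendsto u l (𝓝 a)) (hv : Tendsto v l (𝓝 b)) (hρ : Tendsto ρ l (𝓝 r))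
    (ha : 0 < a) (hb : 0 < b) :
    Tendsto (fun i => _root_.reluKernel (u i) (v i) (ρ i)) l (𝓝 (_root_.reluKernel a b r)) := by
  have hnorm := hu.sqrt.mul hv.sqrt
  have hangle := (continuous_arccos.tendsto _).comp (hρ.div hnorm (by positivity))
  exact ((tendsto_const_nhds.mul hu.sqrt).mul hv.sqrt).mul
    ((continuous_arcCosJ.tendsto _).comp hangle)

lemma reluKernel_stackedDot {Ω : Type*} (xc : ℕ → ℤ → Ω → ℝ) (d c : ℕ) (t₁ t₂ : ℤ) (ω : Ω) :
    reluKernel (stackedDot xc d c t₁ t₁ ω) (stackedDot xc d c t₂ t₂ ω)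
        (stackedDot xc d c t₁ t₂ ω) =
      1 / (2 * π) * stackedNorm xc d c t₁ ω * stackedNorm xc d c t₂ ω *
        arcCosJ (stackedAngle xc d c t₁ t₂ ω) := by
  rw [reluKernel, stackedAngle]
  split_ifs with h
  · rfl
  -- a zero norm makes both sides vanish, whatever angle the convention assigns
  · rcases not_and_or.mp h with h | h <;> simp_all [stackedNorm]

theorem relu_kernel_tendsto_ae_general
    {Ω : Type*} [MeasurableSpace Ω] (μ : Measure Ω)
    (x : ℤ → Ω → ℝ) (K : ℤ → ℝ)
    (hL2 : ∀ t, MemLp (x t) 2 μ)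
    (hcov : ∀ t₁ t₂, ∫ ω, x t₁ ω * x t₂ ω ∂μ = K (t₁ - t₂))
    (hK0 : 0 < K 0)
    (xc : ℕ → ℤ → Ω → ℝ)
    (hxc_meas : ∀ k t, Measurable (xc k t))
    (hxc_indep : iIndepFun (fun k ω (t : ℤ) => xc k t ω) μ)
    (hxc_copy : ∀ k, Measure.map (fun ω (t : ℤ) => xc k t ω) μ
      = Measure.map (fun ω (t : ℤ) => x t ω) μ)
    (d : ℕ) (hd : 1 ≤ d) (t₁ t₂ : ℤ) :
    ∀ᵐ ω ∂μ,
      Tendsto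
        (fun c : ℕ =>
          (1 / ((c : ℝ) * d)) * (1 / (2 * Real.pi)) *
            stackedNorm xc d c t₁ ω * stackedNorm xc d c t₂ ω *
            (Real.sin (stackedAngle xc d c t₁ t₂ ω) +
              (Real.pi - stackedAngle xc d c t₁ t₂ ω) *
                Real.cos (stackedAngle xc d c t₁ t₂ ω)))
        atTop
        (𝓝 ((K 0 / (2 * Real.pi)) *
          (Real.sin (Real.arccos (K (t₂ - t₁) / K 0)) +
            (Real.pi - Real.arccos (K (t₂ - t₁) / K 0)) *
              Real.cos (Real.arccos (K (t₂ - t₁) / K 0))))) := by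
  have hslln := ae_tendsto_stackedDot_div hL2 hcov hxc_meas hxc_indep hxc_copy (by omega : d ≠ 0)
  filter_upwards [hslln t₁ t₁, hslln t₂ t₂, hslln t₂ t₁] with ω h₁ h₂ h₁₂
  rw [sub_self] at h₁ h₂
  simp only [stackedDot_comm xc d _ t₂ t₁] at h₁₂
  have hlim := h₁.reluKernel h₂ h₁₂ hK0 hK0
  rw [reluKernel_self hK0.le] at hlim
  refine hlim.congr' ((eventually_ne_atTop 0).mono fun c hc => ?_)
  have hn : 0 < (c : ℝ) * d :=
    mul_pos (Nat.cast_pos.mpr (Nat.pos_of_ne_zero hc)) (Nat.cast_pos.mpr hd)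
  rw [reluKernel_div hn, reluKernel_stackedDot, arcCosJ]
  ring

/-- **Lemma 1, ReLU kernel convergence.** For a wide-sense stationary
mean-zero process `x` with covariance `K`, `K(0) > 0`, and i.i.d. channel copies
`xc k`, the normalized ReLU arc-cosine kernel
`(1/(cd)) (1/(2π)) ‖X̄_c(t₁)‖ ‖X̄_c(t₂)‖ (sin θ_c + (π − θ_c) cos θ_c)`
converges almost surely to `(K(0)/(2π)) (sin θ + (π − θ) cos θ)` with
`θ = arccos(K(r)/K(0))`, `r = t₂ − t₁`. -/
theorem relu_kernel_tendsto_ae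
    {Ω : Type*} [MeasurableSpace Ω] (μ : Measure Ω) [IsProbabilityMeasure μ]
    (x : ℤ → Ω → ℝ) (K : ℤ → ℝ)
    (hx_meas : ∀ t, Measurable (x t))
    (hL2 : ∀ t, MemLp (x t) 2 μ)
    (hmean : ∀ t, ∫ ω, x t ω ∂μ = 0)
    (hcov : ∀ t₁ t₂, ∫ ω, x t₁ ω * x t₂ ω ∂μ = K (t₁ - t₂))
    (hK0 : 0 < K 0)
    (xc : ℕ → ℤ → Ω → ℝ)
    (hxc_meas : ∀ k t, Measurable (xc k t))
    (hxc_indep : iIndepFun (fun k ω (t : ℤ) => xc k t ω) μ)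
    (hxc_copy : ∀ k, Measure.map (fun ω (t : ℤ) => xc k t ω) μ
      = Measure.map (fun ω (t : ℤ) => x t ω) μ)
    (d : ℕ) (hd : 1 ≤ d) (t₁ t₂ : ℤ) :
    ∀ᵐ ω ∂μ,
      Tendsto
        (fun c : ℕ =>
          (1 / ((c : ℝ) * d)) * (1 / (2 * Real.pi)) *
            stackedNorm xc d c t₁ ω * stackedNorm xc d c t₂ ω *
            (Real.sin (stackedAngle xc d c t₁ t₂ ω) +
              (Real.pi - stackedAngle xc d c t₁ t₂ ω) *
                Real.cos (stackedAngle xc d c t₁ t₂ ω)))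
        atTop
        (𝓝 ((K 0 / (2 * Real.pi)) *
          (Real.sin (Real.arccos (K (t₂ - t₁) / K 0)) +
            (Real.pi - Real.arccos (K (t₂ - t₁) / K 0)) *
              Real.cos (Real.arccos (K (t₂ - t₁) / K 0))))) :=
  relu_kernel_tendsto_ae_general μ x K hL2 hcov hK0 xc hxc_meas hxc_indep hxc_copy d hd t₁ t₂
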